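/- Let a < b be reals and n ≥ 1. For real x with na ≤ x ≤ nb, the n-dimensional Lebesgue measure of { y ∈ [a,b]^n : y_1 + ... + y_n ≤ x }, divided by (b-a)^n, equals (1/n!) · ∑_{k=0}^{⌊(x-na)/(b-a)⌋} (-1)^k · C(n,k) · ((x-na)/(b-a) - k)^n. -/

import Mathlib

/-!
Rescaling `y ↦ (y - a) / (b - a)` maps the region onto its `[0,1]` counterpart and multiplies
volumes by `(b - a)ⁿ`, so it suffices to compute the Irwin–Hall volume
`V n t = vol {y ∈ [0,1]ⁿ | ∑ yᵢ ≤ t}`. Fubini in the first coordinate gives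
`V (n+1) t = ∫₀¹ V n (t - s) ds`, and integrating the truncated powers `max (t - k) 0 ^ n`
turns `∑ₖ (-1)ᵏ C(n,k) (t - k)₊ⁿ / n!` into the same expression with `n + 1` by Pascal's rule
(an instance of `Δⁿ⁺¹ = Δⁿ ∘ Δ` for forward differences). For `t ≥ 0` the terms with
`k > ⌊t⌋` vanish, which yields the floor-truncated sum.
-/

open MeasureTheory Finset fwdDiff

section AlternatingSum

variable {R : Type*} [CommRing R]

theorem alternating_choose_sum_eq_fwdDiff_iter (M : ℕ → R) (n : ℕ) :
    ∑ k ∈ range (n + 1), (-1 : R) ^ k * n.choose k * M k = (-1) ^ n * (Δ_[1])^[n] M 0 := by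
  rw [fwdDiff_iter_eq_sum_shift, mul_sum]
  refine sum_congr rfl fun k hk => ?_
  obtain ⟨j, rfl⟩ := Nat.exists_eq_add_of_le (Nat.lt_succ_iff.mp (mem_range.mp hk))
  simp only [Nat.add_sub_cancel_left, zsmul_eq_mul, smul_eq_mul, zero_add, mul_one]
  push_cast
  have hsq : ((-1 : R) ^ j) ^ 2 = 1 := by rw [← pow_mul, mul_comm, pow_mul]; simp
  linear_combination (-(-1 : R) ^ k * (k + j).choose k * M k) * hsq

theorem alternating_choose_sum_sub_succ (M : ℕ → R) (n : ℕ) :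
    ∑ k ∈ range (n + 1), (-1 : R) ^ k * n.choose k * (M k - M (k + 1)) =
      ∑ k ∈ range (n + 2), (-1 : R) ^ k * (n + 1).choose k * M k := by
  have hΔ : (fun k => M k - M (k + 1)) = (-1 : ℤ) • Δ_[1] M := by
    ext k; simp [fwdDiff]
  rw [alternating_choose_sum_eq_fwdDiff_iter, alternating_choose_sum_eq_fwdDiff_iter, hΔ,
    fwdDiff_iter_const_smul, Function.iterate_succ_apply]
  simp [pow_succ]

end AlternatingSum

def boxSumSublevel (n : ℕ) (a b x : ℝ) : Set (Fin n → ℝ) :=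
  {y | (∀ i, y i ∈ Set.Icc a b) ∧ ∑ i, y i ≤ x}

section BoxSumSublevel

variable (n : ℕ) (a b x : ℝ)

theorem measurableSet_boxSumSublevel : MeasurableSet (boxSumSublevel n a b x) := by
  unfold boxSumSublevel; measurability

theorem volume_boxSumSublevel_lt_top : volume (boxSumSublevel n a b x) < ⊤ :=
  (measure_mono (t := Set.Icc (fun _ => a) fun _ => b) fun _ hy =>
    ⟨fun i => (hy.1 i).1, fun i => (hy.1 i).2⟩).trans_lt isCompact_Icc.measure_lt_top

theorem volume_boxSumSublevel_succ :
    volume (boxSumSublevel (n + 1) a b x) =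
      ∫⁻ s in Set.Icc a b, volume (boxSumSublevel n a b (x - s)) := by
  have hsplit := (volume_preserving_piFinSuccAbove (fun _ : Fin (n + 1) => ℝ) 0).symm
  have hpre : (MeasurableEquiv.piFinSuccAbove (fun _ : Fin (n + 1) => ℝ) 0).symm ⁻¹'
      boxSumSublevel (n + 1) a b x =
      {p | p.2 ∈ boxSumSublevel n a b (x - p.1)} ∩ Set.Icc a b ×ˢ Set.univ := by
    ext ⟨s, z⟩
    simp only [MeasurableEquiv.piFinSuccAbove, Fin.zero_succAbove, Fin.insertNthEquiv_zero,
      MeasurableEquiv.symm_mk, Equiv.symm_symm, MeasurableEquiv.coe_mk, boxSumSublevel, Set.mem_Icc,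
      Fin.forall_fin_succ, Fin.sum_univ_succ, Set.preimage_ofPred_eq, Fin.consEquiv_apply,
      Fin.cons_zero, Fin.cons_succ, Set.mem_ofPred_eq, le_sub_iff_add_le', Set.mem_inter_iff,
      Set.mem_prod, Set.mem_univ, and_true]
    tauto
  have hmeas : MeasurableSet {p : ℝ × (Fin n → ℝ) | p.2 ∈ boxSumSublevel n a b (x - p.1)} := by
    unfold boxSumSublevel; measurability
  rw [← hsplit.measure_preimage (measurableSet_boxSumSublevel _ _ _ _).nullMeasurableSet, hpre,
    ← Measure.restrict_apply' (measurableSet_Icc.prod MeasurableSet.univ), Measure.volume_eq_prod,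
    ← Measure.prod_restrict, Measure.restrict_univ, Measure.prod_apply hmeas]
  rfl

variable {a b}

theorem boxSumSublevel_eq_preimage (hab : a < b) :
    boxSumSublevel n a b x = (· + fun _ => -a) ⁻¹' (((b - a)⁻¹ • ·) ⁻¹'
      boxSumSublevel n 0 1 ((x - n * a) / (b - a))) := by
  have hba : 0 < b - a := sub_pos.2 hab
  have hcoord (u : ℝ) : (b - a)⁻¹ * (u + -a) ∈ Set.Icc 0 1 ↔ u ∈ Set.Icc a b := by
    rw [← sub_eq_add_neg, inv_mul_eq_div, Set.mem_Icc, Set.mem_Icc, le_div_iff₀ hba, zero_mul,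
      sub_nonneg, div_le_one hba, sub_le_sub_iff_right]
  have hsum (y : Fin n → ℝ) : ∑ i, (b - a)⁻¹ * (y i + -a) = (∑ i, y i - n * a) / (b - a) := by
    rw [← mul_sum, sum_add_distrib, sum_const, card_univ, Fintype.card_fin, nsmul_eq_mul,
      inv_mul_eq_div]
    ring
  ext y
  simp only [boxSumSublevel, Set.mem_preimage, Set.mem_ofPred_eq, Pi.smul_apply, Pi.add_apply,
    smul_eq_mul, hcoord, hsum, div_le_div_iff_of_pos_right hba, sub_le_sub_iff_right]

theorem volume_boxSumSublevel_eq (hab : a < b) :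
    volume (boxSumSublevel n a b x) =
      ENNReal.ofReal ((b - a) ^ n) * volume (boxSumSublevel n 0 1 ((x - n * a) / (b - a))) := by
  have hba : 0 < b - a := sub_pos.2 hab
  rw [boxSumSublevel_eq_preimage n x hab, measure_preimage_add_right,
    Measure.addHaar_preimage_smul volume (inv_ne_zero hba.ne'), Module.finrank_fin_fun,
    ← inv_pow, inv_inv, abs_of_pos (pow_pos hba n)]

end BoxSumSublevel

theorem hasDerivAt_max_zero_pow_succ {n : ℕ} (hn : n ≠ 0) (u : ℝ) :
    HasDerivAt (fun v : ℝ => max v 0 ^ (n + 1)) ((n + 1) * max u 0 ^ n) u := by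
  refine hasDerivAt_of_hasDerivAt_of_ne' (f := fun v : ℝ => max v 0 ^ (n + 1))
    (g := fun v : ℝ => (n + 1) * max v 0 ^ n) (x := 0) (fun y hy => ?_) (by fun_prop)
    (by fun_prop) u
  rcases hy.lt_or_gt with hy | hy
  · have hzero : (fun v : ℝ => max v 0 ^ (n + 1)) =ᶠ[nhds y] fun _ => 0 := by
      filter_upwards [Iio_mem_nhds hy] with v (hv : v < 0)
      simp [max_eq_right hv.le]
    simpa [max_eq_right hy.le, hn] using (hasDerivAt_const y (0 : ℝ)).congr_of_eventuallyEq hzero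
  · have hpow : (fun v : ℝ => max v 0 ^ (n + 1)) =ᶠ[nhds y] fun v => v ^ (n + 1) := by
      filter_upwards [Ioi_mem_nhds hy] with v (hv : 0 < v)
      simp [max_eq_left hv.le]
    simpa [max_eq_left hy.le] using (hasDerivAt_pow (n + 1) y).congr_of_eventuallyEq hpow

theorem integral_max_sub_zero_pow {n : ℕ} (hn : n ≠ 0) (c : ℝ) :
    ∫ s in (0 : ℝ)..1, max (c - s) 0 ^ n =
      (max c 0 ^ (n + 1) - max (c - 1) 0 ^ (n + 1)) / (n + 1) := by
  have hderiv (s : ℝ) :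
      HasDerivAt (fun v : ℝ => max v 0 ^ (n + 1) / (n + 1)) (max s 0 ^ n) s := by
    have := (hasDerivAt_max_zero_pow_succ hn s).div_const ((n : ℝ) + 1)
    rwa [mul_div_cancel_left₀ _ (by positivity)] at this
  rw [intervalIntegral.integral_comp_sub_left (fun v => max v 0 ^ n), sub_zero,
    intervalIntegral.integral_eq_sub_of_hasDerivAt (fun s _ => hderiv s)
      ((by fun_prop : Continuous fun v : ℝ => max v 0 ^ n).intervalIntegrable _ _)]
  ring

-- Only for `n ≠ 0` is this the Irwin–Hall CDF: `irwinHallCDF 0 = 1` since `0 ^ 0 = 1`.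
noncomputable def irwinHallCDF (n : ℕ) (t : ℝ) : ℝ :=
  1 / (n.factorial : ℝ) * ∑ k ∈ range (n + 1), (-1 : ℝ) ^ k * (n.choose k : ℝ) * max (t - k) 0 ^ n

theorem continuous_irwinHallCDF (n : ℕ) : Continuous (irwinHallCDF n) := by
  unfold irwinHallCDF; fun_prop

theorem integral_irwinHallCDF_sub {n : ℕ} (hn : n ≠ 0) (t : ℝ) :
    ∫ s in (0 : ℝ)..1, irwinHallCDF n (t - s) = irwinHallCDF (n + 1) t := by
  have hterm (k : ℕ) : ∫ s in (0 : ℝ)..1, (-1 : ℝ) ^ k * n.choose k * max (t - s - k) 0 ^ n =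
      (-1 : ℝ) ^ k * n.choose k *
        (max (t - k) 0 ^ (n + 1) - max (t - (k + 1 : ℕ)) 0 ^ (n + 1)) / (n + 1) := by
    simp_rw [sub_right_comm t _ (k : ℝ)]
    rw [intervalIntegral.integral_const_mul, integral_max_sub_zero_pow hn]
    push_cast
    ring_nf
  simp only [irwinHallCDF]
  rw [intervalIntegral.integral_const_mul, intervalIntegral.integral_finsetSum
    fun k _ => (by fun_prop : Continuous _).intervalIntegrable _ _,
    sum_congr rfl fun k _ => hterm k, ← sum_div,
    alternating_choose_sum_sub_succ (fun k : ℕ => max (t - k) 0 ^ (n + 1)), Nat.factorial_succ]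
  push_cast
  field_simp

theorem irwinHallCDF_eq_sum_floor {n : ℕ} (hn : n ≠ 0) {t : ℝ} (ht : 0 ≤ t) :
    irwinHallCDF n t = 1 / (n.factorial : ℝ) *
      ∑ k ∈ range (⌊t⌋₊ + 1), (-1 : ℝ) ^ k * (n.choose k : ℝ) * (t - k) ^ n := by
  set m := ⌊t⌋₊
  have hchoose : ∑ k ∈ range (n + 1), (-1 : ℝ) ^ k * (n.choose k : ℝ) * max (t - k) 0 ^ n =
      ∑ k ∈ range (n + m + 1), (-1 : ℝ) ^ k * (n.choose k : ℝ) * max (t - k) 0 ^ n := by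
    refine sum_subset (range_subset_range.2 (by omega)) fun k _ hk => ?_
    rw [Nat.choose_eq_zero_of_lt (by simpa using hk), Nat.cast_zero, mul_zero, zero_mul]
  have hfloor : ∑ k ∈ range (m + 1), (-1 : ℝ) ^ k * (n.choose k : ℝ) * (t - k) ^ n =
      ∑ k ∈ range (n + m + 1), (-1 : ℝ) ^ k * (n.choose k : ℝ) * max (t - k) 0 ^ n := by
    refine sum_subset_zero_on_sdiff (range_subset_range.2 (by omega)) (fun k hk => ?_)
      fun k hk => ?_
    · have htk : t < k := (Nat.floor_lt ht).1 (by simp only [mem_sdiff, mem_range] at hk; omega)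
      rw [max_eq_right (by linarith), zero_pow hn, mul_zero]
    · have hkt : (k : ℝ) ≤ t :=
        (Nat.cast_le.2 (Nat.lt_succ_iff.1 (mem_range.1 hk))).trans (Nat.floor_le ht)
      rw [max_eq_left (sub_nonneg.2 hkt)]
  rw [irwinHallCDF, hchoose, hfloor]

theorem toReal_volume_boxSumSublevel_one_zero_one (t : ℝ) :
    (volume (boxSumSublevel 1 0 1 t)).toReal = irwinHallCDF 1 t := by
  have hpre : boxSumSublevel 1 0 1 t =
      MeasurableEquiv.funUnique (Fin 1) ℝ ⁻¹' Set.Icc 0 (min 1 t) := by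
    ext y
    simp [boxSumSublevel, Fin.forall_fin_one, and_assoc]
  have hvol : volume (boxSumSublevel 1 0 1 t) = volume (Set.Icc 0 (min 1 t)) := by
    rw [hpre]; exact (volume_preserving_funUnique (Fin 1) ℝ).measure_preimage_equiv _
  rw [hvol, Real.volume_Icc, ENNReal.toReal_ofReal', irwinHallCDF]
  norm_num [sum_range_succ]
  rcases le_total t 0 with ht | ht <;> rcases le_total t 1 with ht' | ht' <;>
    simp only [max_def, min_def] <;> split_ifs <;> linarith

theorem toReal_volume_boxSumSublevel_zero_one {n : ℕ} (hn : n ≠ 0) (t : ℝ) :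
    (volume (boxSumSublevel n 0 1 t)).toReal = irwinHallCDF n t := by
  obtain ⟨n, rfl⟩ := Nat.exists_eq_add_one_of_ne_zero hn
  clear hn
  induction n generalizing t with
  | zero => exact toReal_volume_boxSumSublevel_one_zero_one t
  | succ m ih =>
    have hvol (u : ℝ) :
        volume (boxSumSublevel (m + 1) 0 1 u) = ENNReal.ofReal (irwinHallCDF (m + 1) u) := by
      rw [← ih u, ENNReal.ofReal_toReal (volume_boxSumSublevel_lt_top _ 0 1 u).ne]
    have hnonneg (u : ℝ) : 0 ≤ irwinHallCDF (m + 1) u := ih u ▸ ENNReal.toReal_nonneg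
    rw [volume_boxSumSublevel_succ, ← integral_irwinHallCDF_sub m.add_one_ne_zero,
      intervalIntegral.integral_of_le zero_le_one, ← integral_Icc_eq_integral_Ioc]
    simp_rw [hvol]
    have hint : IntegrableOn (fun s => irwinHallCDF (m + 1) (t - s)) (Set.Icc 0 1) :=
      ((continuous_irwinHallCDF _).comp (continuous_sub_left t)).integrableOn_Icc
    rw [← ofReal_integral_eq_lintegral_ofReal hint (Filter.Eventually.of_forall fun _ => hnonneg _),
      ENNReal.toReal_ofReal (integral_nonneg fun _ => hnonneg _)]

theorem ab_uniform_sum_cdf_general (n : ℕ) (hn : 1 ≤ n) (a b : ℝ) (hab : a < b)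
    (x : ℝ) (hx0 : n * a ≤ x) :
    (volume {y : Fin n → ℝ | (∀ i, y i ∈ Set.Icc a b) ∧ ∑ i, y i ≤ x}).toReal / (b - a) ^ n =
      (1 / (n.factorial : ℝ)) *
        ∑ k ∈ Finset.range (⌊(x - n * a) / (b - a)⌋₊ + 1),
          (-1 : ℝ) ^ k * (n.choose k : ℝ) * ((x - n * a) / (b - a) - (k : ℝ)) ^ n := by
  have hn0 : n ≠ 0 := Nat.one_le_iff_ne_zero.1 hn
  have hba : 0 < b - a := sub_pos.2 hab
  have ht : 0 ≤ (x - n * a) / (b - a) := div_nonneg (sub_nonneg.2 hx0) hba.le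
  change (volume (boxSumSublevel n a b x)).toReal / _ = _
  rw [volume_boxSumSublevel_eq n x hab, ENNReal.toReal_mul, ENNReal.toReal_ofReal (by positivity),
    mul_div_cancel_left₀ _ (by positivity), toReal_volume_boxSumSublevel_zero_one hn0,
    irwinHallCDF_eq_sum_floor hn0 ht]

/-- CDF of the `[a,b]`-uniform-sum distribution. -/
theorem ab_uniform_sum_cdf (n : ℕ) (hn : 1 ≤ n) (a b : ℝ) (hab : a < b)
    (x : ℝ) (hx0 : n * a ≤ x) (hxn : x ≤ n * b) :
    (volume {y : Fin n → ℝ | (∀ i, y i ∈ Set.Icc a b) ∧ ∑ i, y i ≤ x}).toReal / (b - a) ^ n =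
      (1 / (n.factorial : ℝ)) *
        ∑ k ∈ Finset.range (⌊(x - n * a) / (b - a)⌋₊ + 1),
          (-1 : ℝ) ^ k * (n.choose k : ℝ) * ((x - n * a) / (b - a) - (k : ℝ)) ^ n :=
  ab_uniform_sum_cdf_general n hn a b hab x hx0
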